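/- Let H and G be finite simple graphs and suppose G contains no induced copy of H. If G contains a copy of the augmented pattern H⁺ (an injective graph homomorphism from H⁺ to G), then G contains at least two distinct triangles, i.e., at least two distinct 3-cliques. -/

import Mathlib

open SimpleGraph

/-- Vertex type of the augmented pattern `H⁺`: the vertices of `H` together with two new
vertices `(s, false)` and `(s, true)` for every non-edge `s = {u,v}` of `H`. -/
abbrev AugVert {V : Type*} (H : SimpleGraph V) : Type _ :=
  V ⊕ ({s : Sym2 V // ¬ s.IsDiag ∧ s ∉ H.edgeSet} × Bool)

/-- The augmented pattern `H⁺`: all edges of `H`, together with, for each non-edge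
`{u,v}` of `H`, the four edges joining `u` and `v` to the two new vertices
`(⟨{u,v},_⟩, false)` and `(⟨{u,v},_⟩, true)`. -/
def augment {V : Type*} (H : SimpleGraph V) : SimpleGraph (AugVert H) :=
  SimpleGraph.fromRel (fun x y =>
    match x, y with
    | Sum.inl a, Sum.inl b => H.Adj a b
    | Sum.inl a, Sum.inr p => a ∈ p.1.1
    | _, _ => False)

/-!
Compose a copy `ψ` of `H⁺` with the inclusion `H → H⁺`. This is an injective homomorphism
`H → G`, which cannot be induced, so some non-edge `{a,b}` of `H` is sent to an edge of `G`.
Then `ψ a`, `ψ b` and either of the two distinct vertices `ψ x_{ab}`, `ψ y_{ab}` form two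
distinct triangles.
-/

namespace SimpleGraph

variable {V U : Type*} {H : SimpleGraph V} {G : SimpleGraph U}

theorem Hom.exists_not_adj_map_adj (f : H →g G) (hf : Function.Injective f)
    (hfree : ¬ ∃ φ : V → U, Function.Injective φ ∧ ∀ a b : V, H.Adj a b ↔ G.Adj (φ a) (φ b)) :
    ∃ a b : V, ¬ H.Adj a b ∧ G.Adj (f a) (f b) := by
  by_contra! h
  exact hfree ⟨f, hf, fun a b => ⟨f.map_adj, fun hG => by_contra fun hH => h a b hH hG⟩⟩

theorem exists_ne_is3Clique_of_adj_of_adj {u v x y : U} (huv : G.Adj u v)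
    (hux : G.Adj u x) (hvx : G.Adj v x) (huy : G.Adj u y) (hvy : G.Adj v y) (hxy : x ≠ y) :
    ∃ T₁ T₂ : Finset U, G.IsNClique 3 T₁ ∧ G.IsNClique 3 T₂ ∧ T₁ ≠ T₂ := by
  classical
  refine ⟨{u, v, x}, {u, v, y}, is3Clique_triple_iff.2 ⟨huv, hux, hvx⟩,
    is3Clique_triple_iff.2 ⟨huv, huy, hvy⟩, fun h => ?_⟩
  have hx : x ∈ ({u, v, y} : Finset U) := h ▸ by simp
  simp only [Finset.mem_insert, Finset.mem_singleton] at hx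
  rcases hx with rfl | rfl | rfl
  exacts [G.irrefl hux, G.irrefl hvx, hxy rfl]

end SimpleGraph

namespace augment

variable {V : Type*} (H : SimpleGraph V)

def inlHom : H →g augment H where
  toFun := Sum.inl
  map_rel' hab := ⟨by simpa using hab.ne, Or.inl hab⟩

theorem inlHom_injective : Function.Injective (inlHom H) := Sum.inl_injective

theorem adj_inl_inr {a : V} {p : {s : Sym2 V // ¬ s.IsDiag ∧ s ∉ H.edgeSet} × Bool}
    (ha : a ∈ p.1.1) : (augment H).Adj (Sum.inl a) (Sum.inr p) :=
  ⟨by simp, Or.inl ha⟩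

end augment

theorem augment_copy_gives_two_triangles {V U : Type*}
    (H : SimpleGraph V) (G : SimpleGraph U)
    (hfree : ¬ ∃ φ : V → U, Function.Injective φ ∧
      ∀ a b : V, H.Adj a b ↔ G.Adj (φ a) (φ b))
    (hcopy : ∃ ψ : augment H →g G, Function.Injective ψ) :
    ∃ T₁ T₂ : Finset U, G.IsNClique 3 T₁ ∧ G.IsNClique 3 T₂ ∧ T₁ ≠ T₂ := by
  obtain ⟨ψ, hψ⟩ := hcopy
  obtain ⟨a, b, hnadj, hG⟩ := (ψ.comp (augment.inlHom H)).exists_not_adj_map_adj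
    (hψ.comp (augment.inlHom_injective H)) hfree
  have hab : a ≠ b := fun h => G.irrefl (h ▸ hG)
  have hs : ¬ s(a, b).IsDiag ∧ s(a, b) ∉ H.edgeSet := ⟨by simpa using hab, by simpa using hnadj⟩
  let x : AugVert H := Sum.inr (⟨s(a, b), hs⟩, false)
  let y : AugVert H := Sum.inr (⟨s(a, b), hs⟩, true)
  have hxy : ψ x ≠ ψ y := fun h => by simpa [x, y] using hψ h
  exact exists_ne_is3Clique_of_adj_of_adj hG
    (ψ.map_adj (augment.adj_inl_inr H (by simp))) (ψ.map_adj (augment.adj_inl_inr H (by simp)))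
    (ψ.map_adj (augment.adj_inl_inr H (by simp))) (ψ.map_adj (augment.adj_inl_inr H (by simp))) hxy
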